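/- arXiv:math/0503023 — 2 statements merged into one kernel-verified Lean document; each statement's English description precedes it below -/
import Mathlib

section
/- Let f₁,…,f_{2s} be nonnegative nondecreasing functions on (0,∞), none vanishing identically, such that for some constants d₀, K > 0 and all i, f_i(r) ≤ K(r^{d₀} + 1) for all r > 0. Then for every Ω > 1 there exist a subset of s of these functions f_{α₁},…,f_{α_s} and infinitely many integers m ≥ 1 such that f_{α_i}(Ω^{m+1}) ≤ Ω^{2d₀} f_{α_i}(Ω^m) for all i = 1,…,s. -/
open Finset in
private lemma aux_growth (g : ℕ → ℝ) (X c : ℝ) (hc : 0 ≤ c) (hX : 0 ≤ X)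
    (Bad : ℕ → Prop) [DecidablePred Bad] (m₀ : ℕ)
    (hbase : c ≤ g m₀)
    (hstepb : ∀ m, Bad m → X * g m ≤ g (m + 1))
    (hstepg : ∀ m, g m ≤ g (m + 1)) :
    ∀ t : ℕ, c * X ^ ((Finset.Ico m₀ (m₀ + t)).filter Bad).card ≤ g (m₀ + t) := by
  intro t
  induction t with
  | zero => simpa using hbase
  | succ t ih =>
    have hcx : (0:ℝ) ≤ c * X ^ ((Finset.Ico m₀ (m₀ + t)).filter Bad).card :=
      mul_nonneg hc (pow_nonneg hX _)
    have hins : Finset.Ico m₀ (m₀ + t + 1) = insert (m₀ + t) (Finset.Ico m₀ (m₀ + t)) :=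
      Nat.Ico_succ_right_eq_insert_Ico (Nat.le_add_right _ _)
    have hnotmem : (m₀ + t) ∉ Finset.Ico m₀ (m₀ + t) := by simp
    rw [show m₀ + (t + 1) = (m₀ + t) + 1 from rfl, hins, Finset.filter_insert]
    by_cases hb : Bad (m₀ + t)
    · rw [if_pos hb, Finset.card_insert_of_notMem (fun h => hnotmem (Finset.mem_of_mem_filter _ h))]
      calc c * X ^ (((Finset.Ico m₀ (m₀ + t)).filter Bad).card + 1)
          = X * (c * X ^ ((Finset.Ico m₀ (m₀ + t)).filter Bad).card) := by ring
        _ ≤ X * g (m₀ + t) := mul_le_mul_of_nonneg_left ih hX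
        _ ≤ g (m₀ + t + 1) := hstepb _ hb
    · rw [if_neg hb]
      exact ih.trans (hstepg _)

theorem stmt_0 (s : ℕ) (hs : 1 ≤ s) (f : Fin (2 * s) → ℝ → ℝ)
    (d₀ K : ℝ) (hd₀ : 0 < d₀) (hK : 0 < K)
    (hnonneg : ∀ i, ∀ r > (0:ℝ), 0 ≤ f i r)
    (hmono : ∀ i, MonotoneOn (f i) (Set.Ioi 0))
    (hnontriv : ∀ i, ∃ r > (0:ℝ), 0 < f i r)
    (hbound : ∀ i, ∀ r > (0:ℝ), f i r ≤ K * (r ^ d₀ + 1))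
    (Ω : ℝ) (hΩ : 1 < Ω) :
    ∃ α : Fin s → Fin (2 * s), Function.Injective α ∧
      {m : ℕ | 1 ≤ m ∧ ∀ i, f (α i) (Ω ^ (m + 1)) ≤ Ω ^ (2 * d₀) * f (α i) (Ω ^ m)}.Infinite := by
  classical
  have hΩ0 : (0:ℝ) < Ω := lt_trans one_pos hΩ
  set L := Real.log Ω with hLdef
  have hL0 : 0 < L := Real.log_pos hΩ
  have hΩpow : ∀ m : ℕ, (0:ℝ) < Ω ^ m := fun m => pow_pos hΩ0 m
  have hΩpow1 : ∀ m : ℕ, (1:ℝ) ≤ Ω ^ m := fun m => one_le_pow₀ hΩ.le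
  set X : ℝ := Ω ^ (2 * d₀) with hXdef
  have hX0 : 0 < X := Real.rpow_pos_of_pos hΩ0 _
  have hlogX : Real.log X = 2 * d₀ * L := Real.log_rpow hΩ0 _
  set Bad : Fin (2 * s) → ℕ → Prop :=
    fun i m => ¬ f i (Ω ^ (m + 1)) ≤ X * f i (Ω ^ m) with hBaddef
  -- step bounds for any index
  have hstepb : ∀ i m, Bad i m → X * f i (Ω ^ m) ≤ f i (Ω ^ (m + 1)) :=
    fun i m hb => (not_le.mp hb).le
  have hstepg : ∀ i m, f i (Ω ^ m) ≤ f i (Ω ^ (m + 1)) := fun i m =>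
    hmono i (Set.mem_Ioi.2 (hΩpow m)) (Set.mem_Ioi.2 (hΩpow (m + 1)))
      (pow_le_pow_right₀ hΩ.le (Nat.le_succ m))
  -- per-index counting bound
  have key : ∀ i : Fin (2 * s), ∃ C : ℝ, ∀ M : ℕ,
      (((Finset.Icc 1 M).filter (Bad i)).card : ℝ) ≤ ((M : ℝ) + 1) / 2 + C := by
    intro i
    obtain ⟨r, hr0, hfr⟩ := hnontriv i
    obtain ⟨n, hn⟩ : ∃ n : ℕ, r < Ω ^ n := pow_unbounded_of_one_lt r hΩ
    set m₀ := n + 1 with hm₀def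
    have hrm : r ≤ Ω ^ m₀ := (hn.trans_le (pow_le_pow_right₀ hΩ.le (Nat.le_succ n))).le
    set c := f i r with hcdef
    have hc0 : 0 < c := hfr
    have hbase : c ≤ f i (Ω ^ m₀) :=
      hmono i (Set.mem_Ioi.2 hr0) (Set.mem_Ioi.2 (hΩpow m₀)) hrm
    have hgrow := aux_growth (fun m => f i (Ω ^ m)) X c hc0.le hX0.le (Bad i) m₀
      hbase (hstepb i) (hstepg i)
    set C₀ : ℝ := (Real.log (2 * K) - Real.log c) / (2 * d₀ * L) with hC₀def
    refine ⟨(m₀ : ℝ) + max C₀ 0, ?_⟩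
    intro M
    have hsub : (Finset.Icc 1 M).filter (Bad i) ⊆
        (Finset.Ico 1 m₀).filter (Bad i) ∪ (Finset.Ico m₀ (M + 1)).filter (Bad i) := by
      intro x hx
      simp only [Finset.mem_filter, Finset.mem_Icc] at hx
      simp only [Finset.mem_union, Finset.mem_filter, Finset.mem_Ico]
      rcases lt_or_ge x m₀ with h | h
      · exact Or.inl ⟨⟨hx.1.1, h⟩, hx.2⟩
      · exact Or.inr ⟨⟨h, Nat.lt_succ_of_le hx.1.2⟩, hx.2⟩
    have hcard1 : ((Finset.Icc 1 M).filter (Bad i)).card ≤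
        m₀ + ((Finset.Ico m₀ (M + 1)).filter (Bad i)).card := by
      calc ((Finset.Icc 1 M).filter (Bad i)).card
          ≤ ((Finset.Ico 1 m₀).filter (Bad i) ∪ (Finset.Ico m₀ (M + 1)).filter (Bad i)).card :=
            Finset.card_le_card hsub
        _ ≤ ((Finset.Ico 1 m₀).filter (Bad i)).card +
            ((Finset.Ico m₀ (M + 1)).filter (Bad i)).card := Finset.card_union_le _ _
        _ ≤ m₀ + ((Finset.Ico m₀ (M + 1)).filter (Bad i)).card := by
            gcongr
            refine (Finset.card_filter_le _ _).trans ?_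
            rw [Nat.card_Ico]
            omega
    rcases le_or_gt m₀ (M + 1) with hle | hlt
    · -- main case
      set B := ((Finset.Ico m₀ (M + 1)).filter (Bad i)).card with hBdef
      have ht : m₀ + (M + 1 - m₀) = M + 1 := by omega
      have h1 : c * X ^ B ≤ f i (Ω ^ (M + 1)) := by
        have := hgrow (M + 1 - m₀)
        rwa [ht] at this
      have h2 : f i (Ω ^ (M + 1)) ≤ 2 * K * (Ω ^ (M + 1) : ℝ) ^ d₀ := by
        have hb := hbound i (Ω ^ (M + 1)) (hΩpow _)
        have h1le : (1:ℝ) ≤ (Ω ^ (M + 1) : ℝ) ^ d₀ := Real.one_le_rpow (hΩpow1 _) hd₀.le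
        nlinarith
      have hpos : (0:ℝ) < c * X ^ B := mul_pos hc0 (pow_pos hX0 _)
      have hlog := Real.log_le_log hpos (h1.trans h2)
      rw [Real.log_mul hc0.ne' (pow_pos hX0 B).ne', Real.log_pow, hlogX,
        Real.log_mul (by positivity) (by positivity),
        Real.log_rpow (hΩpow _), Real.log_pow, show Real.log Ω = L from rfl] at hlog
      push_cast at hlog
      -- hlog : log c + B * (2*d₀*L) ≤ log (2*K) + d₀ * ((M+1) * L)
      have hBle : (B : ℝ) ≤ ((M : ℝ) + 1) / 2 + C₀ := by
        have h2dL : (0:ℝ) < 2 * d₀ * L := by positivity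
        have hC₀ : C₀ * (2 * d₀ * L) = Real.log (2 * K) - Real.log c := by
          rw [hC₀def, div_mul_cancel₀ _ h2dL.ne']
        have e1 : (((M:ℝ) + 1) / 2 + C₀) * (2 * d₀ * L)
            = Real.log (2 * K) - Real.log c + d₀ * (((M:ℝ) + 1) * L) := by
          rw [add_mul, hC₀]; ring
        have hprod : (B : ℝ) * (2 * d₀ * L) ≤ (((M:ℝ) + 1) / 2 + C₀) * (2 * d₀ * L) := by
          rw [e1]; linarith
        exact le_of_mul_le_mul_right hprod h2dL
      have : (((Finset.Icc 1 M).filter (Bad i)).card : ℝ) ≤ (m₀ : ℝ) + B := by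
        exact_mod_cast hcard1
      have hmax : C₀ ≤ max C₀ 0 := le_max_left _ _
      linarith
    · -- degenerate case : M + 1 < m₀
      have hB0 : ((Finset.Ico m₀ (M + 1)).filter (Bad i)).card = 0 := by
        rw [Finset.card_eq_zero, Finset.filter_eq_empty_iff]
        intro x hx
        simp only [Finset.mem_Ico] at hx
        omega
      have : (((Finset.Icc 1 M).filter (Bad i)).card : ℝ) ≤ (m₀ : ℝ) := by
        exact_mod_cast (hcard1.trans_eq (by omega))
      have h0 : (0:ℝ) ≤ max C₀ 0 := le_max_right _ _
      have hM0 : (0:ℝ) ≤ (M:ℝ) := Nat.cast_nonneg _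
      linarith
  choose C hC using key
  set Good : ℕ → Finset (Fin (2 * s)) :=
    fun m => Finset.univ.filter (fun i => f i (Ω ^ (m + 1)) ≤ X * f i (Ω ^ m)) with hGooddef
  -- main infinitude claim
  have hSinf : {m : ℕ | 1 ≤ m ∧ s ≤ (Good m).card}.Infinite := by
    by_contra hfin
    rw [Set.not_infinite] at hfin
    obtain ⟨N, hN⟩ := hfin.bddAbove
    set M₀ := N + 1 with hM₀def
    have hM₀1 : 1 ≤ M₀ := Nat.le_add_left _ _
    have hbadmany : ∀ m, M₀ ≤ m → s + 1 ≤ (Finset.univ.filter (fun i => Bad i m)).card := by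
      intro m hm
      have hnm : m ∉ {m : ℕ | 1 ≤ m ∧ s ≤ (Good m).card} := by
        intro hmem
        exact absurd (hN hmem) (by omega)
      have hlt : (Good m).card < s := by
        by_contra h
        exact hnm ⟨le_trans hM₀1 hm, not_lt.mp h⟩
      have hpart : (Good m).card + (Finset.univ.filter (fun i => Bad i m)).card
          = 2 * s := by
        have := Finset.card_filter_add_card_filter_not
          (s := (Finset.univ : Finset (Fin (2 * s))))
          (p := fun i => f i (Ω ^ (m + 1)) ≤ X * f i (Ω ^ m))
        simpa [hGooddef, hBaddef] using this
      omega
    set D : ℝ := ∑ i : Fin (2 * s), C i with hDdef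
    set M : ℕ := M₀ + (s + 1) * M₀ + ⌈D⌉₊ with hMdef
    have hMge : M₀ ≤ M := by omega
    -- double counting
    have hsum1 : (s + 1) * (M + 1 - M₀) ≤
        ∑ m ∈ Finset.Icc M₀ M, (Finset.univ.filter (fun i => Bad i m)).card := by
      calc (s + 1) * (M + 1 - M₀) = (Finset.Icc M₀ M).card * (s + 1) := by
            rw [Nat.card_Icc]; ring
        _ = (Finset.Icc M₀ M).card • (s + 1) := by rw [smul_eq_mul]
        _ ≤ ∑ m ∈ Finset.Icc M₀ M, (Finset.univ.filter (fun i => Bad i m)).card :=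
            Finset.card_nsmul_le_sum _ _ _ (fun m hm =>
              hbadmany m (Finset.mem_Icc.mp hm).1)
    have hswap : ∑ m ∈ Finset.Icc M₀ M, (Finset.univ.filter (fun i => Bad i m)).card
        = ∑ i : Fin (2 * s), ((Finset.Icc M₀ M).filter (Bad i)).card := by
      simp_rw [Finset.card_filter]
      exact Finset.sum_comm
    have hsum2 : ∀ i : Fin (2 * s), (((Finset.Icc M₀ M).filter (Bad i)).card : ℝ)
        ≤ ((M : ℝ) + 1) / 2 + C i := by
      intro i
      refine le_trans ?_ (hC i M)
      have hsubset : (Finset.Icc M₀ M).filter (Bad i) ⊆ (Finset.Icc 1 M).filter (Bad i) :=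
        Finset.filter_subset_filter _ (Finset.Icc_subset_Icc_left hM₀1)
      exact_mod_cast Finset.card_le_card hsubset
    have hfinal : ((s : ℝ) + 1) * ((M : ℝ) + 1 - M₀) ≤ (s : ℝ) * ((M : ℝ) + 1) + D := by
      have h1 : ((s + 1) * (M + 1 - M₀) : ℕ) ≤
          ∑ i : Fin (2 * s), ((Finset.Icc M₀ M).filter (Bad i)).card := by
        rw [← hswap]; exact hsum1
      have h2 : (((s + 1) * (M + 1 - M₀) : ℕ) : ℝ) = ((s:ℝ) + 1) * ((M : ℝ) + 1 - M₀) := by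
        push_cast [Nat.cast_sub (by omega : M₀ ≤ M + 1)]
        ring
      have h3 : ((∑ i : Fin (2 * s), ((Finset.Icc M₀ M).filter (Bad i)).card : ℕ) : ℝ)
          ≤ ∑ i : Fin (2 * s), (((M : ℝ) + 1) / 2 + C i) := by
        push_cast
        exact Finset.sum_le_sum (fun i _ => hsum2 i)
      have h4 : ∑ i : Fin (2 * s), (((M : ℝ) + 1) / 2 + C i)
          = (s : ℝ) * ((M : ℝ) + 1) + D := by
        rw [Finset.sum_add_distrib, Finset.sum_const, Finset.card_univ, Fintype.card_fin,
          hDdef]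
        push_cast
        ring
      calc ((s:ℝ) + 1) * ((M : ℝ) + 1 - M₀) = (((s + 1) * (M + 1 - M₀) : ℕ) : ℝ) := h2.symm
        _ ≤ _ := by exact_mod_cast h1.trans (le_of_eq rfl)
        _ ≤ _ := h3
        _ = _ := h4
    -- contradiction
    have hDle : D ≤ (⌈D⌉₊ : ℝ) := Nat.le_ceil D
    have hMcast : (M : ℝ) = (M₀ : ℝ) + ((s:ℝ) + 1) * (M₀ : ℝ) + (⌈D⌉₊ : ℝ) := by
      rw [hMdef]; push_cast; ring
    have hM₀0 : (0:ℝ) ≤ (M₀ : ℝ) := Nat.cast_nonneg _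
    nlinarith [hfinal, hDle, hMcast, hM₀0]
  -- pigeonhole over subsets of size s
  have hpick : ∀ m ∈ {m : ℕ | 1 ≤ m ∧ s ≤ (Good m).card},
      ∃ T : Finset (Fin (2 * s)), T ⊆ Good m ∧ T.card = s := by
    intro m hm
    exact Finset.exists_subset_card_eq hm.2
  set g : ℕ → Finset (Fin (2 * s)) := fun m =>
    if h : m ∈ {m : ℕ | 1 ≤ m ∧ s ≤ (Good m).card} then (hpick m h).choose else ∅ with hgdef
  have hfiber : ∃ T : Finset (Fin (2 * s)),
      {m ∈ {m : ℕ | 1 ≤ m ∧ s ≤ (Good m).card} | g m = T}.Infinite := by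
    by_contra h
    push_neg at h
    refine hSinf ?_
    have hsub : {m : ℕ | 1 ≤ m ∧ s ≤ (Good m).card} ⊆
        ⋃ T ∈ (Finset.univ : Finset (Finset (Fin (2 * s)))),
          {m ∈ {m : ℕ | 1 ≤ m ∧ s ≤ (Good m).card} | g m = T} := by
      intro m hm
      exact Set.mem_biUnion (Finset.mem_univ (g m)) ⟨hm, rfl⟩
    exact Set.Finite.subset (Set.Finite.biUnion (Finset.finite_toSet _) (fun T _ => h T)) hsub
  obtain ⟨T, hT⟩ := hfiber
  obtain ⟨m₁, hm₁⟩ := hT.nonempty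
  have hTcard : T.card = s := by
    have hmem : m₁ ∈ {m : ℕ | 1 ≤ m ∧ s ≤ (Good m).card} := hm₁.1
    have := (hpick m₁ hmem).choose_spec.2
    rw [← hm₁.2, hgdef]
    simpa [hmem] using this
  set e : T ≃ Fin s := Finset.equivFinOfCardEq hTcard with hedef
  refine ⟨fun j => (e.symm j : Fin (2 * s)), ?_, ?_⟩
  · intro a b hab
    exact e.symm.injective (Subtype.coe_injective hab)
  · refine hT.mono ?_
    intro m hm
    obtain ⟨hmS, hgm⟩ := hm
    have hTsub : T ⊆ Good m := by
      have := (hpick m hmS).choose_spec.1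
      rw [← hgm, hgdef]
      simpa [hmS] using this
    refine ⟨hmS.1, fun j => ?_⟩
    have hj : ((e.symm j : T) : Fin (2 * s)) ∈ Good m := hTsub (e.symm j).2
    rw [hGooddef] at hj
    simpa [hXdef] using (Finset.mem_filter.mp hj).2
end

section
/- Let V be a real vector space with positive semidefinite symmetric bilinear forms J_r (r > 0), each monotone nondecreasing in r. Suppose u₁,…,u_s ∈ V satisfy J_r(u_i,u_i) ≤ K(r^{d₀}+1) for all r > 0 and some K, d₀ > 0. Define w_{i,r} as the J_r-orthogonal complement of u_i relative to span(u₁,…,u_{i−1}), and f_i(r) = J_r(w_{i,r}, w_{i,r}). Then each f_i is nonnegative, nondecreasing in r, and satisfies f_i(r) ≤ K(r^{d₀}+1) for all r > 0. -/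
theorem stmt_5 (V : Type*) [AddCommGroup V] [Module ℝ V]
    (J : ℝ → V →ₗ[ℝ] V →ₗ[ℝ] ℝ)
    (hsymm : ∀ r x y, J r x y = J r y x)
    (hpsd : ∀ r x, 0 ≤ J r x x)
    (hmono : ∀ u : V, MonotoneOn (fun r => J r u u) (Set.Ioi 0))
    (K d₀ : ℝ) (hK : 0 < K) (hd₀ : 0 < d₀)
    (u : ℕ → V)
    (hbound : ∀ i, ∀ r > (0:ℝ), J r (u i) (u i) ≤ K * (r ^ d₀ + 1))
    (w : ℕ → ℝ → V)
    (hwspan : ∀ i r, u i - w i r ∈ Submodule.span ℝ (u '' Set.Iio i))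
    (hworth : ∀ i, ∀ r > (0:ℝ), ∀ j < i, J r (w i r) (u j) = 0) :
    ∀ i, (∀ r > (0:ℝ), 0 ≤ J r (w i r) (w i r)) ∧
      MonotoneOn (fun r => J r (w i r) (w i r)) (Set.Ioi 0) ∧
      ∀ r > (0:ℝ), J r (w i r) (w i r) ≤ K * (r ^ d₀ + 1) := by
  intro i
  have horth : ∀ r > (0:ℝ), ∀ v ∈ Submodule.span ℝ (u '' Set.Iio i), J r (w i r) v = 0 := by
    intro r hr v hv
    induction hv using Submodule.span_induction with
    | mem x hx => obtain ⟨j, hj, rfl⟩ := hx; exact hworth i r hr j hj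
    | zero => simp
    | add x y _ _ hx hy => simp [hx, hy]
    | smul c x _ hx => simp [hx]
  have hmin : ∀ r > (0:ℝ), ∀ v ∈ Submodule.span ℝ (u '' Set.Iio i),
      J r (w i r) (w i r) ≤ J r (u i - v) (u i - v) := by
    intro r hr v hv
    set W := w i r with hW
    set z := (u i - W) - v with hz
    have hzmem : z ∈ Submodule.span ℝ (u '' Set.Iio i) := sub_mem (hwspan i r) hv
    have h1 : J r W z = 0 := horth r hr _ hzmem
    have h2 : J r z W = 0 := by rw [hsymm]; exact h1
    have key : u i - v = W + z := by rw [hz]; abel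
    have expand : J r (u i - v) (u i - v) = J r W W + J r z z := by
      rw [key]
      simp only [map_add, LinearMap.add_apply, h1, h2, add_zero, zero_add]
    rw [expand]
    linarith [hpsd r z]
  refine ⟨fun r _ => hpsd r _, ?_, ?_⟩
  · intro r hr s hs hrs
    have hmem : u i - w i s ∈ Submodule.span ℝ (u '' Set.Iio i) := hwspan i s
    have h1 := hmin r hr _ hmem
    have h2 : u i - (u i - w i s) = w i s := by abel
    rw [h2] at h1
    exact h1.trans (hmono (w i s) hr hs hrs)
  · intro r hr
    have h1 := hmin r hr 0 (zero_mem _)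
    rw [sub_zero] at h1
    exact h1.trans (hbound i r hr)
end
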